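/- For rooted binary trees, if m_{i,j}(T_a) = 0 (tips i and j have the root as their MRCA in T_a) and v_λ(T_a) = v_λ(T_b) for some λ ∈ (0,1), then m_{i,j}(T_b) = 0 and M_{i,j}(T_b) = 0; hence trees at v_λ-distance zero share the same root partition of the tip set. -/

import Mathlib

/-- Rooted binary trees with tips labeled by `Fin k`; each internal node
stores the branch lengths of the edges to its two children. -/
inductive RTree (k : ℕ) : Type
  | leaf : Fin k → RTree k
  | node : ℝ → RTree k → ℝ → RTree k → RTree k

namespace RTree

variable {k : ℕ}

/-- The list of tip labels of a tree. -/
def tipList : RTree k → List (Fin k)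
  | leaf i => [i]
  | node _ l _ r => l.tipList ++ r.tipList

/-- The set of tip labels of a tree. -/
def tips (T : RTree k) : Finset (Fin k) := T.tipList.toFinset

/-- `T` is a phylogenetic tree on `k` labeled tips: each label occurs exactly once. -/
def IsPhylo (T : RTree k) : Prop := T.tipList.Nodup ∧ ∀ i : Fin k, i ∈ T.tipList

/-- All branch lengths are positive. -/
def PosLens : RTree k → Prop
  | leaf _ => True
  | node a l b r => 0 < a ∧ 0 < b ∧ PosLens l ∧ PosLens r

/-- All branch lengths are nonnegative. -/
def NonnegLens : RTree k → Prop
  | leaf _ => True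
  | node a l b r => 0 ≤ a ∧ 0 ≤ b ∧ NonnegLens l ∧ NonnegLens r

/-- All branch lengths are at most `ε`. -/
def LensLE (ε : ℝ) : RTree k → Prop
  | leaf _ => True
  | node a l b r => a ≤ ε ∧ b ≤ ε ∧ LensLE ε l ∧ LensLE ε r

/-- All branch lengths are equal to `1`. -/
def UnitLens : RTree k → Prop
  | leaf _ => True
  | node a l b r => a = 1 ∧ b = 1 ∧ UnitLens l ∧ UnitLens r

/-- `m T i j`: the number of edges on the path from the root to the
most recent common ancestor of tips `i` and `j`. -/
def m : RTree k → Fin k → Fin k → ℕ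
  | leaf _, _, _ => 0
  | node _ l _ r, i, j =>
      if i ∈ l.tips ∧ j ∈ l.tips then m l i j + 1
      else if i ∈ r.tips ∧ j ∈ r.tips then m r i j + 1
      else 0

/-- `Mlen T i j`: the sum of branch lengths on the path from the root to the
most recent common ancestor of tips `i` and `j`. -/
def Mlen : RTree k → Fin k → Fin k → ℝ
  | leaf _, _, _ => 0
  | node a l b r, i, j =>
      if i ∈ l.tips ∧ j ∈ l.tips then Mlen l i j + a
      else if i ∈ r.tips ∧ j ∈ r.tips then Mlen r i j + b
      else 0

/-- Whether the tree is a single leaf. -/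
def isLeaf : RTree k → Bool
  | leaf _ => true
  | node _ _ _ _ => false

/-- `pend T i`: the length of the pendant edge leading to tip `i`. -/
def pend : RTree k → Fin k → ℝ
  | leaf _, _ => 0
  | node a l b r, i =>
      if i ∈ l.tips then (if l.isLeaf then a else pend l i)
      else if i ∈ r.tips then (if r.isLeaf then b else pend r i)
      else 0

/-- The set of clades (tip sets of rooted subtrees) of a tree.  Two rooted
trees have the same topology iff they have the same set of clades, i.e. their
internal edges induce the same tip partitions. -/
def clades : RTree k → Set (Finset (Fin k))
  | leaf i => {{i}}
  | node a l b r => insert (node a l b r).tips (clades l ∪ clades r)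

/-- Equality of rooted trees: same topology (ignoring the left/right order of
children) and equal corresponding branch lengths. -/
inductive TreeEq : RTree k → RTree k → Prop
  | leaf (i : Fin k) : TreeEq (.leaf i) (.leaf i)
  | node {l l' r r' : RTree k} (a b : ℝ) :
      TreeEq l l' → TreeEq r r' → TreeEq (.node a l b r) (.node a l' b r')
  | swap {l l' r r' : RTree k} (a b : ℝ) :
      TreeEq l l' → TreeEq r r' → TreeEq (.node a l b r) (.node b r' a l')

/-- `S` is the rooted subtree of `T` hanging at a node at edge-depth `d`. -/
inductive SubtreeAt : RTree k → ℕ → RTree k → Prop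
  | refl (T : RTree k) : SubtreeAt T 0 T
  | left {l S : RTree k} {d : ℕ} (a b : ℝ) (r : RTree k) :
      SubtreeAt l d S → SubtreeAt (.node a l b r) (d + 1) S
  | right {r S : RTree k} {d : ℕ} (a b : ℝ) (l : RTree k) :
      SubtreeAt r d S → SubtreeAt (.node a l b r) (d + 1) S

/-- Relabel the tips of a tree by a permutation. -/
def relabel (σ : Equiv.Perm (Fin k)) : RTree k → RTree k
  | leaf i => leaf (σ i)
  | node a l b r => node a (relabel σ l) b (relabel σ r)

/-- The set of unordered pairs of distinct tips, represented by ordered pairs `(i, j)` with `i < j`. -/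
def tipPairs (k : ℕ) : Finset (Fin k × Fin k) :=
  Finset.univ.filter (fun p => p.1 < p.2)

/-- The `λ`-entry of the tree vector `v_λ(T)` at the pair `(i, j)`:
`(1 − λ) m_{i,j} + λ M_{i,j}`. -/
noncomputable def vPair (lam : ℝ) (T : RTree k) (i j : Fin k) : ℝ :=
  (1 - lam) * (T.m i j : ℝ) + lam * T.Mlen i j

/-- The `λ`-entry of the tree vector `v_λ(T)` at tip `i`: `(1 − λ) · 1 + λ p_i`. -/
noncomputable def vTip (lam : ℝ) (T : RTree k) (i : Fin k) : ℝ :=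
  (1 - lam) * 1 + lam * T.pend i

/-- The metric `d_λ(T_a, T_b) = ‖v_λ(T_a) − v_λ(T_b)‖₂`. -/
noncomputable def treeDist (lam : ℝ) (Ta Tb : RTree k) : ℝ :=
  Real.sqrt
    ((∑ p ∈ tipPairs k, (vPair lam Ta p.1 p.2 - vPair lam Tb p.1 p.2) ^ 2) +
      ∑ i : Fin k, (vTip lam Ta i - vTip lam Tb i) ^ 2)

/-- `‖m(T_a) − m(T_b)‖₂`, the Euclidean distance between the topology vectors
(the final `k` entries of `m` are all `1` and contribute nothing). -/
noncomputable def mDist (Ta Tb : RTree k) : ℝ :=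
  Real.sqrt (∑ p ∈ tipPairs k, ((Ta.m p.1 p.2 : ℝ) - (Tb.m p.1 p.2 : ℝ)) ^ 2)

/-- `‖M(T_a) − M(T_b)‖₂`, the Euclidean distance between the
branch-length vectors (root-to-MRCA path lengths and pendant lengths). -/
noncomputable def MDist (Ta Tb : RTree k) : ℝ :=
  Real.sqrt
    ((∑ p ∈ tipPairs k, (Ta.Mlen p.1 p.2 - Tb.Mlen p.1 p.2) ^ 2) +
      ∑ i : Fin k, (Ta.pend i - Tb.pend i) ^ 2)

/-- `D_λ(T_a,T_b) = (1−λ)‖m(T_a)−m(T_b)‖₂ + λ‖M(T_a)−M(T_b)‖₂`. -/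
noncomputable def DDist (lam : ℝ) (Ta Tb : RTree k) : ℝ :=
  (1 - lam) * mDist Ta Tb + lam * MDist Ta Tb

lemma tipList_ne_nil (T : RTree k) : T.tipList ≠ [] := by
  induction T with
  | leaf i => simp [tipList]
  | node a l b r ihl ihr =>
    simp only [tipList, ne_eq, List.append_eq_nil_iff]
    intro h; exact ihl h.1

lemma tips_nonempty (T : RTree k) : T.tips.Nonempty := by
  have h := tipList_ne_nil T
  rcases List.exists_mem_of_ne_nil _ h with ⟨x, hx⟩
  exact ⟨x, by simpa [tips] using hx⟩

lemma Mlen_nonneg : ∀ (T : RTree k), T.PosLens → ∀ i j : Fin k, 0 ≤ T.Mlen i j := by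
  intro T
  induction T with
  | leaf i => intro _ i j; simp [Mlen]
  | node a l b r ihl ihr =>
    rintro ⟨ha, hb, hl, hr⟩ i j
    simp only [Mlen]
    split_ifs with h1 h2
    · exact add_nonneg (ihl hl i j) ha.le
    · exact add_nonneg (ihr hr i j) hb.le
    · exact le_refl 0

lemma m_zero_Mlen_zero (T : RTree k) (i j : Fin k) (h : T.m i j = 0) :
    T.Mlen i j = 0 := by
  cases T with
  | leaf i => rfl
  | node a l b r =>
    simp only [m] at h
    simp only [Mlen]
    split_ifs with h1 h2 <;> simp_all

lemma key_step (lam : ℝ) (h0 : 0 < lam) (h1 : lam < 1) (Ta Tb : RTree k)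
    (hpb : Tb.PosLens) (i j : Fin k)
    (hv : vPair lam Ta i j = vPair lam Tb i j) (hm : Ta.m i j = 0) :
    Tb.m i j = 0 ∧ Tb.Mlen i j = 0 := by
  have hM : Ta.Mlen i j = 0 := m_zero_Mlen_zero Ta i j hm
  rw [vPair, vPair, hm, hM] at hv
  simp only [Nat.cast_zero, mul_zero, add_zero, zero_add] at hv
  have hmb : (0:ℝ) ≤ (Tb.m i j : ℝ) := Nat.cast_nonneg _
  have hMb := Mlen_nonneg Tb hpb i j
  have h1' : (0:ℝ) < 1 - lam := by linarith
  have hcm : (Tb.m i j : ℝ) = 0 := by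
    nlinarith [mul_nonneg h1'.le hmb, mul_nonneg h0.le hMb]
  refine ⟨by exact_mod_cast hcm, by nlinarith [mul_nonneg h1'.le hmb, mul_nonneg h0.le hMb]⟩

lemma node_cov {a b : ℝ} {l r : RTree k} (h : (RTree.node a l b r).IsPhylo) :
    ∀ i : Fin k, (i ∈ l.tips ↔ i ∉ r.tips) := by
  intro i
  have h2 := h.2 i
  have hnd := h.1
  simp only [tipList, List.nodup_append] at hnd
  simp only [tipList, List.mem_append] at h2
  simp only [tips, List.mem_toFinset]
  constructor
  · intro hl hr; exact hnd.2.2 i hl i hr rfl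
  · intro hr; tauto

lemma node_m_zero_iff {a b : ℝ} {l r : RTree k} (h : (RTree.node a l b r).IsPhylo)
    (i j : Fin k) : (RTree.node a l b r).m i j = 0 ↔ ¬(i ∈ l.tips ↔ j ∈ l.tips) := by
  have hi := node_cov h i
  have hj := node_cov h j
  simp only [m]
  split_ifs with h1 h2
  · simp only [Nat.succ_ne_zero, false_iff]
    simp [h1.1, h1.2]
  · simp only [Nat.succ_ne_zero, false_iff]
    have hil : i ∉ l.tips := fun hh => (hi.mp hh) h2.1
    have hjl : j ∉ l.tips := fun hh => (hj.mp hh) h2.2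
    simp [hil, hjl]
  · simp only [true_iff]
    tauto

end RTree
open RTree in
/-- if `m_{i,j}(T_a) = 0` and `v_λ(T_a) = v_λ(T_b)` for some
`λ ∈ (0,1)`, then `m_{i,j}(T_b) = 0` and `M_{i,j}(T_b) = 0`; hence trees at
`v_λ`-distance zero share the same root partition of the tip set. -/
theorem vlam_eq_root_partition {k : ℕ} (lam : ℝ) (h0 : 0 < lam) (h1 : lam < 1)
    (Ta Tb : RTree k) (ha : Ta.IsPhylo) (hb : Tb.IsPhylo)
    (hpa : Ta.PosLens) (hpb : Tb.PosLens)
    (hv : ∀ i j : Fin k, vPair lam Ta i j = vPair lam Tb i j) :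
    (∀ i j : Fin k, Ta.m i j = 0 → Tb.m i j = 0 ∧ Tb.Mlen i j = 0) ∧
    (∀ (a b a' b' : ℝ) (la ra lb rb : RTree k),
      Ta = .node a la b ra → Tb = .node a' lb b' rb →
      ({la.tips, ra.tips} : Set (Finset (Fin k))) = {lb.tips, rb.tips}) := by
  have key_ab : ∀ i j : Fin k, Ta.m i j = 0 → Tb.m i j = 0 ∧ Tb.Mlen i j = 0 :=
    fun i j => key_step lam h0 h1 Ta Tb hpb i j (hv i j)
  have key_ba : ∀ i j : Fin k, Tb.m i j = 0 → Ta.m i j = 0 ∧ Ta.Mlen i j = 0 :=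
    fun i j => key_step lam h0 h1 Tb Ta hpa i j (hv i j).symm
  refine ⟨key_ab, ?_⟩
  rintro a b a' b' la ra lb rb rfl rfl
  have hcovA := node_cov ha
  have hcovB := node_cov hb
  have hrel : ∀ i j : Fin k, (i ∈ la.tips ↔ j ∈ la.tips) ↔ (i ∈ lb.tips ↔ j ∈ lb.tips) := by
    intro i j
    rw [← not_iff_not, ← node_m_zero_iff ha i j, ← node_m_zero_iff hb i j]
    exact ⟨fun h => (key_ab i j h).1, fun h => (key_ba i j h).1⟩
  obtain ⟨x, hx⟩ := tips_nonempty la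
  by_cases hxb : x ∈ lb.tips
  · have hAB : la.tips = lb.tips := by
      ext i
      have h := hrel i x
      tauto
    have hCD : ra.tips = rb.tips := by
      ext i
      have h1 := hcovA i
      have h2 := hcovB i
      rw [hAB] at h1
      tauto
    rw [hAB, hCD]
  · have hAB : la.tips = rb.tips := by
      ext i
      have h := hrel i x
      have h1 := hcovB i
      tauto
    have hCD : ra.tips = lb.tips := by
      ext i
      have h1 := hcovA i
      have h2 := hcovB i
      rw [hAB] at h1
      tauto
    rw [hAB, hCD, Set.pair_comm]
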